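/- arXiv:0902.4709 — 6 statements merged into one kernel-verified Lean document; each statement's English description precedes it below -/
import Mathlib

section
/- Let f : S¹ → S¹ be an orientation-preserving circle homeomorphism, and let g₁, g₂ be commuting circle homeomorphisms generating an action of ℤ² with rotation number homomorphism ρ : ℤ² → ℝ/ℤ. If f normalizes this ℤ² (i.e., conjugation by f sends (m,n) to the ℤ²-element given by a matrix M ∈ SL(2,ℤ) acting on (m,n)), then the point (ρ(1,0), ρ(0,1)) ∈ (ℝ/ℤ)² is fixed by the action of Mᵀ on the torus (ℝ/ℤ)². -/
/-- If a circle homeomorphism (given by its lift `f`) conjugates the `ℤ²`-action generated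
by commuting lifts `g₁, g₂` according to a matrix `M ∈ SL(2,ℤ)`, then the pair of rotation
numbers `(ρ(1,0), ρ(0,1)) ∈ (ℝ/ℤ)²` is a fixed point of the action of `Mᵀ` on the torus. -/
theorem stmt7 (f g₁ g₂ : CircleDeg1Liftˣ)
    (hcomm : Commute (g₁ : CircleDeg1Liftˣ) g₂)
    (M : Matrix (Fin 2) (Fin 2) ℤ) (hM : M.det = 1)
    (hconj : ∀ m n : ℤ, f * (g₁ ^ m * g₂ ^ n) * f⁻¹
        = g₁ ^ (M.mulVec ![m, n] 0) * g₂ ^ (M.mulVec ![m, n] 1))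
    (r' s' : AddCircle (1 : ℝ))
    (hr : r' = ((CircleDeg1Lift.translationNumber (g₁ : CircleDeg1Lift) : ℝ) : AddCircle (1 : ℝ)))
    (hs : s' = ((CircleDeg1Lift.translationNumber (g₂ : CircleDeg1Lift) : ℝ) : AddCircle (1 : ℝ))) :
    (M 0 0) • r' + (M 1 0) • s' = r' ∧ (M 0 1) • r' + (M 1 1) • s' = s' := by
  set τ₁ := CircleDeg1Lift.translationNumber (g₁ : CircleDeg1Lift)
  set τ₂ := CircleDeg1Lift.translationNumber (g₂ : CircleDeg1Lift)
  have key : ∀ m n : ℤ, (m : ℝ) * τ₁ + n * τ₂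
      = (M.mulVec ![m, n] 0 : ℝ) * τ₁ + (M.mulVec ![m, n] 1 : ℝ) * τ₂ := by
    intro m n
    have h := congrArg (fun u : CircleDeg1Liftˣ =>
      CircleDeg1Lift.translationNumber (u : CircleDeg1Lift)) (hconj m n)
    simp only [Units.val_mul] at h
    rw [CircleDeg1Lift.translationNumber_conj_eq] at h
    rw [CircleDeg1Lift.translationNumber_mul_of_commute
      (hcomm.zpow_zpow m n).units_val] at h
    rw [CircleDeg1Lift.translationNumber_mul_of_commute
      (hcomm.zpow_zpow _ _).units_val] at h
    simpa using h
  have h1 := key 1 0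
  have h2 := key 0 1
  simp [Matrix.mulVec, dotProduct, Fin.sum_univ_two] at h1 h2
  subst hr hs
  constructor
  · simp only [← QuotientAddGroup.mk_zsmul, ← QuotientAddGroup.mk_add]
    congr 1
    rw [zsmul_eq_mul, zsmul_eq_mul]
    exact h1.symm
  · simp only [← QuotientAddGroup.mk_zsmul, ← QuotientAddGroup.mk_add]
    congr 1
    rw [zsmul_eq_mul, zsmul_eq_mul]
    exact h2.symm
end

section
/- Let a group G act on the open interval (0,1) by orientation-preserving homeomorphisms such that the action is free (no nontrivial element has a fixed point). Then G is abelian (isomorphic to a subgroup of (ℝ,+)). Consequently, a free group of rank 2 acting faithfully on (0,1) by homeomorphisms must contain a nontrivial element with a fixed point in (0,1). -/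
/-!
Fix `x₀` and order `G` by `g ≤ h ↔ g x₀ ≤ h x₀`. By the intermediate value theorem a
fixed-point-free increasing homeomorphism moves all points in the same direction, so
`g x₀ < h x₀` forces `g x < h x` for every `x`: the order is invariant under multiplication on
both sides. It is archimedean, since the orbit of a point under a homeomorphism moving every point
up cannot stay bounded: its supremum would be a fixed point.

Hölder's argument for a bi-invariant archimedean order: if there is a least element `e > 1`, then
`G` is generated by `e`. Otherwise every `ε > 1` dominates some `δ ^ 2` with `δ > 1`, while
squeezing `a` and `b` between consecutive powers of `δ` gives `⁅a, b⁆ < δ ^ 2`; hence all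
commutators are trivial. An archimedean ordered abelian group embeds in `ℝ`.
-/

open Set
open scoped commutatorElement

section ArchimedeanGroup

variable {G : Type*} [Group G] [LinearOrder G] [MulLeftMono G] [MulRightMono G]

omit [MulRightMono G] in
theorem zpow_strictMono_of_one_lt {δ : G} (hδ : 1 < δ) : StrictMono fun m : ℤ => δ ^ m :=
  strictMono_int_of_lt_succ fun m => by
    rw [zpow_add_one]
    exact lt_mul_of_one_lt_right' _ hδ

variable (harch : ∀ (x : G) {y : G}, 1 < y → ∃ n : ℕ, x ≤ y ^ n)
include harch

theorem exists_zpow_le_lt_zpow_add_one {δ : G} (hδ : 1 < δ) (a : G) :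
    ∃ m : ℤ, δ ^ m ≤ a ∧ a < δ ^ (m + 1) := by
  have hmono := zpow_strictMono_of_one_lt hδ
  obtain ⟨k, hk⟩ := harch a⁻¹ hδ
  obtain ⟨n, hn⟩ := harch a hδ
  have hne : ∃ m : ℤ, δ ^ m ≤ a := ⟨-k, by simpa [zpow_neg] using inv_le'.mp hk⟩
  have hbdd : ∃ N : ℤ, ∀ m : ℤ, δ ^ m ≤ a → m ≤ N :=
    ⟨n, fun m hm => hmono.le_iff_le.mp (hm.trans (by simpa using hn))⟩
  obtain ⟨m, hm, hmax⟩ := Int.exists_greatest_of_bdd hbdd hne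
  exact ⟨m, hm, lt_of_not_ge fun h => (lt_add_one m).not_ge (hmax _ h)⟩

theorem commutatorElement_lt_sq {δ : G} (hδ : 1 < δ) (a b : G) : ⁅a, b⁆ < δ ^ 2 := by
  obtain ⟨m, hma, ham⟩ := exists_zpow_le_lt_zpow_add_one harch hδ a
  obtain ⟨n, hnb, hbn⟩ := exists_zpow_le_lt_zpow_add_one harch hδ b
  calc ⁅a, b⁆ = a * b * a⁻¹ * b⁻¹ := rfl
    _ < δ ^ (m + 1) * δ ^ (n + 1) * δ ^ (-m) * δ ^ (-n) := by
      refine mul_lt_mul_of_lt_of_le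
        (mul_lt_mul_of_lt_of_le (mul_lt_mul_of_lt_of_lt ham hbn) ?_) ?_
      · simpa [zpow_neg] using inv_le_inv_iff.mpr hma
      · simpa [zpow_neg] using inv_le_inv_iff.mpr hnb
    _ = δ ^ 2 := by
      rw [← zpow_add, ← zpow_add, ← zpow_add, show m + 1 + (n + 1) + -m + -n = 2 by ring]
      exact zpow_two δ ▸ (pow_two δ).symm

theorem exists_eq_zpow_of_forall_le {e : G} (he : 1 < e) (hmin : ∀ g, 1 < g → e ≤ g) (g : G) :
    ∃ m : ℤ, g = e ^ m := by
  obtain ⟨m, hmg, hgm⟩ := exists_zpow_le_lt_zpow_add_one harch he g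
  refine ⟨m, (inv_mul_eq_one.mp ?_).symm⟩
  have h1 : 1 ≤ (e ^ m)⁻¹ * g := le_inv_mul_iff_mul_le.mpr (by rwa [mul_one])
  have h2 : (e ^ m)⁻¹ * g < e := inv_mul_lt_iff_lt_mul.mpr (by rwa [← zpow_add_one])
  exact (h1.eq_or_lt.resolve_right fun h => (hmin _ h).not_gt h2).symm

omit harch in
theorem exists_one_lt_sq_le_of_forall_exists_lt (hdense : ∀ e : G, 1 < e → ∃ g, 1 < g ∧ g < e)
    {ε : G} (hε : 1 < ε) : ∃ δ, 1 < δ ∧ δ ^ 2 ≤ ε := by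
  obtain ⟨g, hg, hgε⟩ := hdense ε hε
  rcases le_or_gt (g ^ 2) ε with h | h
  · exact ⟨g, hg, h⟩
  -- if `g` is too large, its complement `g⁻¹ * ε` in `ε` is smaller than `g`
  refine ⟨g⁻¹ * ε, lt_inv_mul_iff_mul_lt.mpr (by rwa [mul_one]), ?_⟩
  have hlt : g⁻¹ * ε < g := inv_mul_lt_iff_lt_mul.mpr (by rwa [← pow_two])
  calc (g⁻¹ * ε) ^ 2 = g⁻¹ * ε * (g⁻¹ * ε) := pow_two _
    _ ≤ g * (g⁻¹ * ε) := mul_le_mul_left hlt.le _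
    _ = ε := mul_inv_cancel_left g ε

theorem mul_comm_of_archimedean (a b : G) : a * b = b * a := by
  rw [← commutatorElement_eq_one_iff_mul_comm]
  by_cases hmin : ∃ e : G, 1 < e ∧ ∀ g, 1 < g → e ≤ g
  · obtain ⟨e, he, hmin⟩ := hmin
    obtain ⟨m, rfl⟩ := exists_eq_zpow_of_forall_le harch he hmin a
    obtain ⟨n, rfl⟩ := exists_eq_zpow_of_forall_le harch he hmin b
    exact commutatorElement_eq_one_iff_mul_comm.mpr (zpow_mul_comm e m n)
  push Not at hmin
  have hle : ∀ a b : G, ⁅a, b⁆ ≤ 1 := fun a b => by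
    by_contra! h
    obtain ⟨δ, hδ, hδε⟩ := exists_one_lt_sq_le_of_forall_exists_lt hmin h
    exact (commutatorElement_lt_sq harch hδ a b).not_ge hδε
  refine (hle a b).antisymm ?_
  have hba := hle b a
  rwa [← commutatorElement_inv, inv_le_one'] at hba

theorem exists_injective_monoidHom_multiplicative_real_of_archimedean :
    ∃ ψ : G →* Multiplicative ℝ, Function.Injective ψ := by
  let _ : CommGroup G := { ‹Group G› with mul_comm := mul_comm_of_archimedean harch }
  have : IsOrderedMonoid G :=
    ⟨fun _ _ h c => mul_le_mul_left h c, fun _ _ h c => mul_le_mul_right h c⟩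
  have : MulArchimedean G := ⟨harch⟩
  obtain ⟨f, hf⟩ := Archimedean.exists_orderAddMonoidHom_real_injective (Additive G)
  exact ⟨AddMonoidHom.toMultiplicativeRight (f : Additive G →+ ℝ), hf⟩

end ArchimedeanGroup

theorem StrictMono.forall_lt_or_forall_gt {α : Type*} [LinearOrder α] [TopologicalSpace α]
    [OrderTopology α] [DenselyOrdered α] [PreconnectedSpace α] {e : Equiv.Perm α}
    (he : StrictMono e) (hfix : ∀ x, e x ≠ x) : (∀ x, x < e x) ∨ ∀ x, e x < x := by
  by_contra! h
  obtain ⟨⟨a, ha⟩, ⟨b, hb⟩⟩ := h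
  obtain ⟨x, hx⟩ := intermediate_value_univ₂ (he.monotone.continuous_of_surjective e.surjective)
    continuous_id ha hb
  exact hfix x hx

theorem StrictMono.exists_lt_pow_apply {α : Type*} [ConditionallyCompleteLinearOrder α]
    {e : Equiv.Perm α} (he : StrictMono e) (hup : ∀ x, x < e x) (x y : α) :
    ∃ n : ℕ, y < (e ^ n) x := by
  by_contra! h
  let f : α ≃o α := he.orderIsoOfSurjective e e.surjective
  have hbdd : BddAbove (range fun n : ℕ => (e ^ n) x) := ⟨y, forall_mem_range.2 h⟩
  set L := ⨆ n : ℕ, (e ^ n) x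
  have hfL : f L ≤ L := by
    rw [f.map_ciSup hbdd]
    exact ciSup_le fun n => by simpa [pow_succ', f] using le_ciSup hbdd (n + 1)
  exact (hup L).not_ge hfL

theorem injective_apply_of_free {α G : Type*} [Group G] {φ : G →* Equiv.Perm α}
    (hfree : ∀ g, g ≠ 1 → ∀ x, φ g x ≠ x) (x₀ : α) : Function.Injective fun g => φ g x₀ := by
  intro g h hgh
  by_contra hne
  refine hfree (h⁻¹ * g) (fun h1 => hne (inv_mul_eq_one.mp h1).symm) x₀ ?_
  simp [Equiv.Perm.mul_apply, hgh]

section FreeAction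

variable {α G : Type*} [ConditionallyCompleteLinearOrder α] [DenselyOrdered α]
  [TopologicalSpace α] [OrderTopology α] [Group G] {φ : G →* Equiv.Perm α}
  (hmono : ∀ g, StrictMono (φ g)) (hfree : ∀ g, g ≠ 1 → ∀ x, φ g x ≠ x)

include hmono hfree

theorem forall_lt_apply_of_lt_apply {g : G} {x₀ : α} (hg : x₀ < φ g x₀) (x : α) : x < φ g x := by
  have hg1 : g ≠ 1 := by rintro rfl; simp at hg
  refine ((hmono g).forall_lt_or_forall_gt (hfree g hg1)).resolve_right ?_ x
  exact fun h => (h x₀).not_gt hg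

theorem forall_apply_lt_apply_of_lt {g h : G} {x₀ : α} (hgh : φ g x₀ < φ h x₀) (x : α) :
    φ g x < φ h x := by
  have hmove : ∀ y, φ g (φ (g⁻¹ * h) y) = φ h y := fun y => by
    simp [Equiv.Perm.mul_apply]
  have hup : x₀ < φ (g⁻¹ * h) x₀ := (hmono g).lt_iff_lt.mp (by rwa [hmove])
  simpa only [hmove] using hmono g (forall_lt_apply_of_lt_apply hmono hfree hup x)

theorem mul_comm_and_exists_injective_of_free (x₀ : α) :
    (∀ a b : G, a * b = b * a) ∧ ∃ ψ : G →* Multiplicative ℝ, Function.Injective ψ := by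
  let _ : LinearOrder G := LinearOrder.lift' (fun g => φ g x₀) (injective_apply_of_free hfree x₀)
  have : MulLeftMono G := ⟨fun a g h (hgh : φ g x₀ ≤ φ h x₀) =>
    show φ (a * g) x₀ ≤ φ (a * h) x₀ by simpa using (hmono a).monotone hgh⟩
  have : MulRightMono G := ⟨fun a g h (hgh : φ g x₀ ≤ φ h x₀) =>
    show φ (g * a) x₀ ≤ φ (h * a) x₀ by
      rcases hgh.eq_or_lt with hgh | hgh
      · rw [injective_apply_of_free hfree x₀ hgh]
      · simpa using (forall_apply_lt_apply_of_lt hmono hfree hgh _).le⟩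
  have harch : ∀ (g : G) {h : G}, 1 < h → ∃ n : ℕ, g ≤ h ^ n :=
    fun g h (hh : φ 1 x₀ < φ h x₀) => by
      rw [map_one, Equiv.Perm.one_apply] at hh
      obtain ⟨n, hn⟩ := (hmono h).exists_lt_pow_apply
        (forall_lt_apply_of_lt_apply hmono hfree hh) x₀ (φ g x₀)
      exact ⟨n, show φ g x₀ ≤ φ (h ^ n) x₀ by simpa using hn.le⟩
  exact ⟨mul_comm_of_archimedean harch,
    exists_injective_monoidHom_multiplicative_real_of_archimedean harch⟩

end FreeAction

/-- Hölder's theorem: a group acting freely on the open interval `(0,1)` by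
orientation-preserving homeomorphisms is abelian (embeds in `(ℝ,+)`); consequently a free
group of rank 2 acting faithfully on `(0,1)` by orientation-preserving homeomorphisms
contains a nontrivial element with a fixed point. -/
theorem stmt10 :
    (∀ (G : Type) [Group G] (φ : G →* Equiv.Perm ↥(Set.Ioo (0 : ℝ) 1)),
      (∀ g : G, StrictMono (φ g)) →
      (∀ g : G, g ≠ 1 → ∀ x, φ g x ≠ x) →
      ((∀ a b : G, a * b = b * a) ∧
        ∃ ψ : G →* Multiplicative ℝ, Function.Injective ψ)) ∧
    (∀ φ : FreeGroup (Fin 2) →* Equiv.Perm ↥(Set.Ioo (0 : ℝ) 1),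
      (∀ g, StrictMono (φ g)) → Function.Injective φ →
      ∃ g : FreeGroup (Fin 2), g ≠ 1 ∧ ∃ x, φ g x = x) := by
  let x₀ : Ioo (0 : ℝ) 1 := ⟨1 / 2, by norm_num, by norm_num⟩
  -- a point makes `ordConnectedSubsetConditionallyCompleteLinearOrder` available on the interval
  have : Inhabited (Ioo (0 : ℝ) 1) := ⟨x₀⟩
  have hnoncomm : (FreeGroup.of 0 : FreeGroup (Fin 2)) * .of 1 ≠ .of 1 * .of 0 := by decide
  refine ⟨fun G _ φ hmono hfree => mul_comm_and_exists_injective_of_free hmono hfree x₀,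
    fun φ hmono _ => ?_⟩
  by_contra! hfree
  exact hnoncomm ((mul_comm_and_exists_injective_of_free hmono hfree x₀).1 _ _)
end

section
/- Let τ : G → ℝ be a translation number homomorphism for a group G of orientation-preserving homeomorphisms of an interval I preserving a Radon measure μ, defined by τ(g) = μ([x, g(x))) for x ∈ I (with sign convention τ(g) = −μ([g(x),x)) when g(x) < x). Then τ is a well-defined group homomorphism independent of the choice of x, and τ(g) > 0 if and only if g(x) > x for all x ∈ I. -/
open MeasureTheory

noncomputable def nuTN (μ : Measure ℝ) (a b : ℝ) : ℝ :=
  if a ≤ b then (μ (Set.Ico a b)).toReal else -(μ (Set.Ico b a)).toReal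

lemma coreTN (μ : Measure ℝ) (hfin : ∀ x y : ℝ, μ (Set.Ico x y) < ⊤)
    {a b c : ℝ} (hab : a ≤ b) (hbc : b ≤ c) :
    (μ (Set.Ico a c)).toReal = (μ (Set.Ico a b)).toReal + (μ (Set.Ico b c)).toReal := by
  rw [← Set.Ico_union_Ico_eq_Ico hab hbc,
    measure_union Set.Ico_disjoint_Ico_same measurableSet_Ico,
    ENNReal.toReal_add (hfin a b).ne (hfin b c).ne]

lemma nuTN_cocycle (μ : Measure ℝ) (hfin : ∀ x y : ℝ, μ (Set.Ico x y) < ⊤)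
    (x y z : ℝ) : nuTN μ x y + nuTN μ y z = nuTN μ x z := by
  unfold nuTN
  rcases le_or_gt x y with h1 | h1 <;> rcases le_or_gt y z with h2 | h2 <;>
    rcases le_or_gt x z with h3 | h3
  · rw [if_pos h1, if_pos h2, if_pos h3]
    linarith [coreTN μ hfin h1 h2]
  · exact absurd (h1.trans h2) (not_le.mpr h3)
  · rw [if_pos h1, if_neg (not_le.mpr h2), if_pos h3]
    linarith [coreTN μ hfin h3 h2.le]
  · rw [if_pos h1, if_neg (not_le.mpr h2), if_neg (not_le.mpr h3)]
    linarith [coreTN μ hfin h3.le h1]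
  · rw [if_neg (not_le.mpr h1), if_pos h2, if_pos h3]
    linarith [coreTN μ hfin h1.le h3]
  · rw [if_neg (not_le.mpr h1), if_pos h2, if_neg (not_le.mpr h3)]
    linarith [coreTN μ hfin h2 h3.le]
  · exact absurd h3 (not_le.mpr (h2.trans h1))
  · rw [if_neg (not_le.mpr h1), if_neg (not_le.mpr h2), if_neg (not_le.mpr h3)]
    linarith [coreTN μ hfin h2.le h1.le]

lemma nuTN_self (μ : Measure ℝ) (a : ℝ) : nuTN μ a a = 0 := by
  simp [nuTN]

lemma iterTN_unbdd_above {f : ℝ → ℝ} (hc : Continuous f) (h : ∀ y, y < f y) (x : ℝ) :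
    ¬ BddAbove (Set.range fun n => f^[n] x) := by
  intro hb
  have hmono : Monotone fun n => f^[n] x :=
    monotone_nat_of_le_succ fun n => by
      rw [Function.iterate_succ_apply']; exact (h _).le
  have ht : Filter.Tendsto (fun n => f^[n] x) Filter.atTop (nhds (⨆ n, f^[n] x)) :=
    tendsto_atTop_ciSup hmono hb
  have ht2 : Filter.Tendsto (fun n : ℕ => f^[n + 1] x) Filter.atTop
      (nhds (⨆ n, f^[n] x)) := ht.comp (Filter.tendsto_add_atTop_nat 1)
  have ht3 : Filter.Tendsto (fun n : ℕ => f (f^[n] x)) Filter.atTop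
      (nhds (f (⨆ n, f^[n] x))) := (hc.tendsto _).comp ht
  have heq : f (⨆ n, f^[n] x) = ⨆ n, f^[n] x :=
    tendsto_nhds_unique (by simpa [Function.iterate_succ_apply'] using ht3) ht2
  exact absurd heq (h _).ne'

lemma iterTN_unbdd_below {f : ℝ → ℝ} (hc : Continuous f) (h : ∀ y, f y < y) (x : ℝ) :
    ¬ BddBelow (Set.range fun n => f^[n] x) := by
  intro hb
  have hmono : Antitone fun n => f^[n] x :=
    antitone_nat_of_succ_le fun n => by
      rw [Function.iterate_succ_apply']; exact (h _).le
  have ht : Filter.Tendsto (fun n => f^[n] x) Filter.atTop (nhds (⨅ n, f^[n] x)) :=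
    tendsto_atTop_ciInf hmono hb
  have ht2 : Filter.Tendsto (fun n : ℕ => f^[n + 1] x) Filter.atTop
      (nhds (⨅ n, f^[n] x)) := ht.comp (Filter.tendsto_add_atTop_nat 1)
  have ht3 : Filter.Tendsto (fun n : ℕ => f (f^[n] x)) Filter.atTop
      (nhds (f (⨅ n, f^[n] x))) := (hc.tendsto _).comp ht
  have heq : f (⨅ n, f^[n] x) = ⨅ n, f^[n] x :=
    tendsto_nhds_unique (by simpa [Function.iterate_succ_apply'] using ht3) ht2
  exact absurd heq (h _).ne

/-- For a group `G` of orientation-preserving homeomorphisms of an (open) interval,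
identified with `ℝ`, preserving a (nonzero) Radon measure `μ`, the translation number
`τ(g) = μ([x,g(x)))` (with the sign convention `τ(g) = −μ([g(x),x))` when `g(x) < x`) is
independent of `x`, is a group homomorphism, and satisfies `τ(g) > 0` iff `g(y) > y` for
all `y`. -/
theorem stmt15 (G : Type) [Group G] (F : G →* Equiv.Perm ℝ)
    (hmono : ∀ g : G, StrictMono (F g))
    (μ : Measure ℝ) (hμ : μ ≠ 0)
    (hfin : ∀ x y : ℝ, μ (Set.Ico x y) < ⊤)
    (hinv : ∀ g : G, MeasurePreserving (F g) μ μ)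
    (τ : G → ℝ → ℝ)
    (hτ : ∀ g x, τ g x = if x ≤ F g x then (μ (Set.Ico x (F g x))).toReal
      else -(μ (Set.Ico (F g x) x)).toReal) :
    (∀ g x y, τ g x = τ g y) ∧
    (∀ g h x, τ (g * h) x = τ g x + τ h x) ∧
    (∀ g x, 0 < τ g x ↔ ∀ y : ℝ, y < F g y) := by
  -- measure invariance on half-open intervals
  have hEq : ∀ (g : G) (a b : ℝ), μ (Set.Ico (F g a) (F g b)) = μ (Set.Ico a b) := by
    intro g a b
    have hpre : (F g : ℝ → ℝ) ⁻¹' Set.Ico (F g a) (F g b) = Set.Ico a b := by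
      ext t
      simp [Set.mem_Ico, (hmono g).le_iff_le, (hmono g).lt_iff_lt]
    rw [← hpre, (hinv g).measure_preimage measurableSet_Ico.nullMeasurableSet]
  have hτν : ∀ (g : G) (x : ℝ), τ g x = nuTN μ x (F g x) := fun g x => by
    rw [hτ]; rfl
  have hνg : ∀ (g : G) (a b : ℝ), nuTN μ (F g a) (F g b) = nuTN μ a b := by
    intro g a b
    unfold nuTN
    simp only [hEq g, (hmono g).le_iff_le]
  -- independence of base point
  have key : ∀ (g : G) (x y : ℝ), τ g x = τ g y := by
    intro g x y
    have c1 := nuTN_cocycle μ hfin x y (F g x)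
    have c2 := nuTN_cocycle μ hfin y (F g y) (F g x)
    have c3 := nuTN_cocycle μ hfin x y x
    have inv := hνg g y x
    have n0 := nuTN_self μ x
    rw [hτν g x, hτν g y]
    linarith
  refine ⟨key, ?_, ?_⟩
  · -- homomorphism
    intro g h x
    have hmul : (F (g * h)) x = F g (F h x) := by rw [map_mul]; rfl
    have c1 := nuTN_cocycle μ hfin x (F h x) (F g (F h x))
    have k := key g (F h x) x
    rw [hτν (g * h) x, hmul, hτν h x, ← c1, ← hτν g (F h x), k]
    ring
  · -- positivity
    intro g x
    constructor
    · intro hp y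
      by_contra hle
      push_neg at hle
      have hτy : τ g y ≤ 0 := by
        rw [hτ]
        split_ifs with h
        · have : F g y = y := le_antisymm hle h
          simp [this]
        · simp [ENNReal.toReal_nonneg]
      have := key g x y
      linarith
    · intro hp
      have hx : x ≤ F g x := (hp x).le
      rw [hτ, if_pos hx]
      refine ENNReal.toReal_pos (fun h0 => hμ ?_) (hfin _ _).ne
      -- from `μ (Ico x (F g x)) = 0` derive `μ = 0`
      have hcont : ∀ h : G, Continuous (F h) := fun h =>
        (StrictMono.orderIsoOfSurjective _ (hmono h) (F h).surjective).continuous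
      have hginv : ∀ t : ℝ, F g (F g⁻¹ t) = t := by
        intro t
        have : F g (F g⁻¹ t) = F (g * g⁻¹) t := by rw [map_mul]; rfl
        simp [this]
      have hlt : ∀ y : ℝ, F g⁻¹ y < y := by
        intro y
        have := hp (F g⁻¹ y)
        rwa [hginv y] at this
      set b : ℕ → ℝ := fun n => (⇑(F g))^[n] x with hb
      set c : ℕ → ℝ := fun n => (⇑(F g⁻¹))^[n] x with hc
      have hgc : ∀ n, F g (c (n + 1)) = c n := by
        intro n
        show F g ((⇑(F g⁻¹))^[n + 1] x) = _
        rw [Function.iterate_succ_apply', hginv]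
      have hb0 : ∀ n, μ (Set.Ico (b n) (b (n + 1))) = 0 := by
        intro n
        induction n with
        | zero => simpa [hb] using h0
        | succ n ih =>
          have e1 : b (n + 2) = F g (b (n + 1)) := Function.iterate_succ_apply' _ _ _
          have e2 : b (n + 1) = F g (b n) := Function.iterate_succ_apply' _ _ _
          calc μ (Set.Ico (b (n + 1)) (b (n + 2)))
              = μ (Set.Ico (F g (b n)) (F g (b (n + 1)))) := by rw [← e1, ← e2]
            _ = μ (Set.Ico (b n) (b (n + 1))) := hEq g _ _
            _ = 0 := ih
      have hD : ∀ n, μ (Set.Ico (c n) (F g (c n))) = 0 := by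
        intro n
        induction n with
        | zero => simpa [hc] using h0
        | succ n ih =>
          rw [← hEq g (c (n + 1)) (F g (c (n + 1))), hgc n]
          exact ih
      have hc0 : ∀ n, μ (Set.Ico (c (n + 1)) (c n)) = 0 := by
        intro n
        rw [← hEq g (c (n + 1)) (c n), hgc n]
        exact hD n
      have hcb : ∀ n, μ (Set.Ico (c n) (b n)) = 0 := by
        intro n
        induction n with
        | zero => simp [hb, hc]
        | succ n ih =>
          have hsub : Set.Ico (c (n + 1)) (b (n + 1)) ⊆
              (Set.Ico (c (n + 1)) (c n) ∪ Set.Ico (c n) (b n)) ∪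
                Set.Ico (b n) (b (n + 1)) := by
            intro t ht
            rcases lt_or_ge t (c n) with h | h
            · exact Or.inl (Or.inl ⟨ht.1, h⟩)
            · rcases lt_or_ge t (b n) with h' | h'
              · exact Or.inl (Or.inr ⟨h, h'⟩)
              · exact Or.inr ⟨h', ht.2⟩
          exact measure_mono_null hsub
            (measure_union_null (measure_union_null (hc0 n) ih) (hb0 n))
      have hmb : Monotone b := monotone_nat_of_le_succ fun n => by
        have : b (n + 1) = F g (b n) := Function.iterate_succ_apply' _ _ _
        rw [this]; exact (hp _).le
      have hmc : Antitone c := antitone_nat_of_succ_le fun n => by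
        have : c (n + 1) = F g⁻¹ (c n) := Function.iterate_succ_apply' _ _ _
        rw [this]; exact (hlt _).le
      have hA := iterTN_unbdd_above (hcont g) hp x
      have hB := iterTN_unbdd_below (hcont g⁻¹) hlt x
      have hcov : (Set.univ : Set ℝ) ⊆ ⋃ n, Set.Ico (c n) (b n) := by
        intro t _
        obtain ⟨u, ⟨p, rfl⟩, hp1⟩ := not_bddAbove_iff.mp hA t
        obtain ⟨v, ⟨q, rfl⟩, hq1⟩ := not_bddBelow_iff.mp hB t
        refine Set.mem_iUnion.mpr ⟨max p q, ?_, ?_⟩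
        · exact (hmc (le_max_right p q)).trans hq1.le
        · exact lt_of_lt_of_le hp1 (hmb (le_max_left p q))
      have huniv : μ Set.univ = 0 :=
        measure_mono_null hcov (measure_iUnion_null hcb)
      exact Measure.measure_univ_eq_zero.mp huniv
end

section
/- Every finitely generated abelian group of orientation-preserving homeomorphisms of an open interval I without global fixed points in I preserves a Radon measure on I, and any two such invariant Radon measures give translation number homomorphisms that agree up to multiplication by a positive real constant. -/
/-!
Since `G` is finitely generated and abelian and no point is fixed by all of `G`, some `g₀ ∈ G` has
no fixed point at all: fixed-point sets of commuting elements are closed, invariant under `G`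
and unbounded (the supremum of a bounded invariant set would be a global fixed point), so
iterating one element monotonically inside the common fixed points of others produces common
fixed points of any finite set, in particular of a generating set. Up to inversion,
`x < g₀ • x` for all `x`, and the `g₀`-translates of `[0, g₀ • 0)` tile `ℝ`.

Comparing `g ^ q • 0` with the orbit points `g₀ ^ p • 0` gives the translation number
`τ g = sup {p / q | g₀ ^ p • 0 ≤ g ^ q • 0}`, which by commutativity is a homomorphism `G → ℝ`,
monotone in `g • 0`. Then `φ x = sup {τ h | h • 0 ≤ x}` satisfies `φ (g • x) = τ g + φ x`, and the
Stieltjes measure of its right-continuous regularisation is invariant. Conversely, for an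
invariant Radon measure `μ`, `g ↦ μ [x, g • x)` (signed) is a homomorphism bounded below by
`τ g * μ [0, g₀ • 0)`, hence equal to it, and `μ [0, g₀ • 0) > 0` since the tiles cover `ℝ`.
-/

open MeasureTheory Set Filter Topology MulAction

section Iterate

variable {α : Type*} [ConditionallyCompleteLinearOrder α] [TopologicalSpace α] [OrderTopology α]
  {f : α → α}

lemma isFixedPt_ciSup_iterate (hf : Continuous f) (hmono : Monotone f) {x : α} (hx : x ≤ f x)
    (hbdd : BddAbove (range fun n => f^[n] x)) : Function.IsFixedPt f (⨆ n, f^[n] x) :=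
  isFixedPt_of_tendsto_iterate (tendsto_atTop_ciSup (hmono.monotone_iterate_of_le_map hx) hbdd)
    hf.continuousAt

lemma exists_lt_iterate_of_forall_lt (hf : Continuous f) (hmono : Monotone f)
    (hlt : ∀ x, x < f x) (x y : α) : ∃ n, y < f^[n] x := by
  by_contra! h
  have hfix := isFixedPt_ciSup_iterate hf hmono (hlt x).le ⟨y, forall_mem_range.2 h⟩
  exact (hlt _).ne' hfix

lemma exists_isFixedPt_mem_of_le (hf : Continuous f) (hmono : Monotone f) {C : Set α}
    (hC : IsClosed C) (hfC : MapsTo f C C) {x y : α} (hx : x ∈ C) (hxf : x ≤ f x) (hxy : x ≤ y)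
    (hy : Function.IsFixedPt f y) : ∃ z ∈ C, Function.IsFixedPt f z := by
  have hbdd : BddAbove (range fun n => f^[n] x) :=
    ⟨y, forall_mem_range.2 fun n => hy.iterate n ▸ hmono.iterate n hxy⟩
  refine ⟨_, hC.mem_of_tendsto
    (tendsto_atTop_ciSup (hmono.monotone_iterate_of_le_map hxf) hbdd)
    (Eventually.of_forall fun n => hfC.iterate n hx), isFixedPt_ciSup_iterate hf hmono hxf hbdd⟩

end Iterate

section OrderedAction

variable {G α : Type*} [Group G] [MulAction G α] [Preorder α] [CovariantClass G α HSMul.hSMul LE.le]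

def smulOrderIso (g : G) : α ≃o α where
  toEquiv := MulAction.toPerm g
  map_rel_iff' {a b} :=
    ⟨fun h => by simpa using smul_mono_right g⁻¹ h, fun h => smul_mono_right g h⟩

@[simp] lemma smulOrderIso_apply (g : G) (x : α) : smulOrderIso g x = g • x := rfl

@[simp] lemma smulOrderIso_symm_apply (g : G) (x : α) : (smulOrderIso g).symm x = g⁻¹ • x := rfl

end OrderedAction

section FixedPoints

lemma mapsTo_smul_fixedBy {G α : Type*} [CommGroup G] [MulAction G α] (g h : G) :
    MapsTo (h • ·) (fixedBy α g) (fixedBy α g) := fun x hx => by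
  change g • h • x = h • x
  rw [smul_smul, mul_comm, mul_smul, hx]

variable {G α : Type*} [ConditionallyCompleteLinearOrder α]

section Group

variable [Group G] [MulAction G α] [CovariantClass G α HSMul.hSMul LE.le]

lemma sSup_mem_fixedPoints {A : Set α} (hne : A.Nonempty) (hbdd : BddAbove A)
    (hA : ∀ g : G, MapsTo (g • ·) A A) : sSup A ∈ fixedPoints G α := by
  have smul_sSup_le (g : G) : g • sSup A ≤ sSup A := by
    rw [← smulOrderIso_apply, (smulOrderIso g).map_csSup' hne hbdd]
    exact csSup_le_csSup hbdd (hne.image _) (image_subset_iff.2 (hA g))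
  intro g
  refine le_antisymm (smul_sSup_le g) ?_
  simpa using smul_mono_right g (smul_sSup_le g⁻¹)

lemma not_bddAbove_of_mapsTo (hG : fixedPoints G α = ∅) {A : Set α}
    (hne : A.Nonempty) (hA : ∀ g : G, MapsTo (g • ·) A A) : ¬BddAbove A := fun hbdd =>
  hG.subset (sSup_mem_fixedPoints hne hbdd hA)

lemma forall_lt_smul_or_forall_smul_lt [TopologicalSpace α] [OrderTopology α]
    [PreconnectedSpace α] {g : G} (hg : fixedBy α g = ∅) :
    (∀ x : α, x < g • x) ∨ ∀ x : α, g • x < x := by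
  by_contra! h
  obtain ⟨⟨a, ha⟩, b, hb⟩ := h
  obtain ⟨x, hx⟩ := intermediate_value_univ₂ (smulOrderIso g).continuous continuous_id ha hb
  exact hg.subset hx

end Group

variable [CommGroup G] [MulAction G α] [CovariantClass G α HSMul.hSMul LE.le]
  [TopologicalSpace α] [OrderTopology α]

lemma inter_fixedBy_nonempty (hG : fixedPoints G α = ∅) {C : Set α}
    (hC : IsClosed C) (hCinv : ∀ g : G, MapsTo (g • ·) C C) (hCne : C.Nonempty) {h : G}
    (hh : (fixedBy α h).Nonempty) : (C ∩ fixedBy α h).Nonempty := by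
  obtain ⟨x, hx⟩ := hCne
  wlog hxh : x ≤ h • x generalizing h
  · rw [← fixedBy_inv] at hh ⊢
    exact this hh ((smulOrderIso h).lt_symm_apply.2 (not_le.1 hxh)).le
  obtain ⟨y, hy, hxy⟩ := not_bddAbove_iff.1 (not_bddAbove_of_mapsTo hG hh (mapsTo_smul_fixedBy h)) x
  exact exists_isFixedPt_mem_of_le (smulOrderIso h).continuous (smul_mono_right h) hC (hCinv h)
    hx hxh hxy.le hy

lemma biInter_fixedBy_nonempty [Nonempty α] (hG : fixedPoints G α = ∅)
    (hfix : ∀ g : G, (fixedBy α g).Nonempty) (S : Finset G) :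
    (⋂ g ∈ S, fixedBy α g).Nonempty := by
  classical
  induction S using Finset.induction_on with
  | empty => simp
  | insert h S _ ih =>
    rw [Finset.set_biInter_insert, inter_comm]
    refine inter_fixedBy_nonempty hG
      (isClosed_biInter fun g _ => isClosed_eq (smulOrderIso g).continuous continuous_id)
      (fun k x hx => mem_iInter₂.2 fun g hg => mapsTo_smul_fixedBy g k (mem_iInter₂.1 hx g hg))
      ih (hfix h)

lemma exists_fixedBy_eq_empty [Group.FG G] [Nonempty α] (hG : fixedPoints G α = ∅) :
    ∃ g : G, fixedBy α g = ∅ := by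
  by_contra! hfix
  obtain ⟨S, hS⟩ := Group.fg_def.1 ‹_›
  obtain ⟨x, hx⟩ := biInter_fixedBy_nonempty hG hfix S
  have hstab : (⊤ : Subgroup G) ≤ stabilizer G x :=
    hS ▸ (Subgroup.closure_le _).2 fun g hg => mem_iInter₂.1 hx g hg
  exact hG.subset fun g => hstab (Subgroup.mem_top g)

lemma exists_forall_lt_smul [Group.FG G] [ConnectedSpace α] (hG : fixedPoints G α = ∅) :
    ∃ g₀ : G, ∀ x : α, x < g₀ • x := by
  obtain ⟨g, hg⟩ := exists_fixedBy_eq_empty hG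
  rcases forall_lt_smul_or_forall_smul_lt hg with h | h
  · exact ⟨g, h⟩
  · exact ⟨g⁻¹, fun x => (smulOrderIso g).lt_symm_apply.2 (h x)⟩

end FixedPoints

section CommutingAction

variable {G α : Type*} [CommGroup G] [MulAction G α] [Preorder α]
  [CovariantClass G α HSMul.hSMul LE.le] {a b c d : G} {x : α}

lemma mul_smul_le_mul_smul (hab : a • x ≤ b • x) (hcd : c • x ≤ d • x) :
    (a * c) • x ≤ (b * d) • x :=
  calc (a * c) • x = a • c • x := mul_smul a c x
    _ ≤ a • d • x := smul_mono_right a hcd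
    _ = d • a • x := by rw [smul_smul, smul_smul, mul_comm]
    _ ≤ d • b • x := smul_mono_right d hab
    _ = (b * d) • x := by rw [smul_smul, mul_comm]

lemma pow_smul_le_pow_smul (h : a • x ≤ b • x) (n : ℕ) : a ^ n • x ≤ b ^ n • x := by
  induction n with
  | zero => simp
  | succ n ih => simpa only [pow_succ] using mul_smul_le_mul_smul ih h

lemma inv_smul_le_inv_smul_iff : b⁻¹ • x ≤ a⁻¹ • x ↔ a • x ≤ b • x := by
  rw [← (smulOrderIso (a * b)).le_iff_le]
  simp [smul_smul, mul_comm a b]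

end CommutingAction

section Orbit

variable {G : Type*} [Group G] [MulAction G ℝ] [CovariantClass G ℝ HSMul.hSMul LE.le] {g₀ : G}
  (hg₀ : ∀ x : ℝ, x < g₀ • x)
include hg₀

lemma exists_lt_pow_smul (x y : ℝ) : ∃ n : ℕ, y < g₀ ^ n • x := by
  simpa [smul_iterate] using exists_lt_iterate_of_forall_lt (f := (g₀ • ·))
    (smulOrderIso g₀).continuous (smul_mono_right g₀) hg₀ x y

omit [CovariantClass G ℝ HSMul.hSMul LE.le] in
lemma strictMono_zpow_smul (x : ℝ) : StrictMono fun k : ℤ => g₀ ^ k • x :=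
  strictMono_int_of_lt_succ fun k => by
    simpa only [add_comm k 1, zpow_one_add, mul_smul] using hg₀ (g₀ ^ k • x)

lemma exists_zpow_smul_le_lt (x y : ℝ) : ∃ k : ℤ, g₀ ^ k • x ≤ y ∧ y < g₀ ^ (k + 1) • x := by
  obtain ⟨m, hm⟩ := exists_lt_pow_smul hg₀ x y
  obtain ⟨n, hn⟩ := exists_lt_pow_smul hg₀ y x
  have hlow : g₀ ^ (-(n : ℤ)) • x ≤ y := by
    simpa using (smulOrderIso (g₀ ^ n)).symm_apply_le.2 hn.le
  have hbdd (k : ℤ) (hk : g₀ ^ k • x ≤ y) : k ≤ m :=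
    (strictMono_zpow_smul hg₀ x).le_iff_le.1 (hk.trans (by simpa using hm.le))
  obtain ⟨k, hk, hmax⟩ := Int.exists_greatest_of_bdd ⟨m, hbdd⟩ ⟨_, hlow⟩
  exact ⟨k, hk, lt_of_not_ge fun h => by linarith [hmax _ h]⟩

end Orbit

section TranslationNumber

open Pointwise

variable {G : Type*} [CommGroup G] [MulAction G ℝ] [CovariantClass G ℝ HSMul.hSMul LE.le]
  {g₀ : G}

def lowerRatios (g₀ g : G) : Set ℝ :=
  {r | ∃ (p : ℤ) (q : ℕ), 0 < q ∧ r = p / q ∧ g₀ ^ p • (0 : ℝ) ≤ g ^ q • (0 : ℝ)}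

noncomputable def translationNumber (g₀ g : G) : ℝ := sSup (lowerRatios g₀ g)

variable (hg₀ : ∀ x : ℝ, x < g₀ • x)
include hg₀

lemma div_le_div_of_zpow_smul_le {g : G} {p r : ℤ} {q s : ℕ} (hq : 0 < q) (hs : 0 < s)
    (hpq : g₀ ^ p • (0 : ℝ) ≤ g ^ q • 0) (hrs : g ^ s • (0 : ℝ) ≤ g₀ ^ r • 0) :
    (p : ℝ) / q ≤ r / s := by
  have h₁ : g₀ ^ (p * s) • (0 : ℝ) ≤ g ^ (q * s) • 0 := by
    simpa [zpow_mul, pow_mul] using pow_smul_le_pow_smul hpq s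
  have h₂ : g ^ (q * s) • (0 : ℝ) ≤ g₀ ^ (r * q) • 0 := by
    simpa [zpow_mul, pow_mul, mul_comm q s] using pow_smul_le_pow_smul hrs q
  have hps : p * s ≤ r * q := (strictMono_zpow_smul hg₀ 0).le_iff_le.1 (h₁.trans h₂)
  rw [div_le_div_iff₀ (by positivity) (by positivity)]
  exact_mod_cast hps

lemma lowerRatios_nonempty (g : G) : (lowerRatios g₀ g).Nonempty := by
  obtain ⟨k, hk, -⟩ := exists_zpow_smul_le_lt hg₀ 0 (g ^ 1 • (0 : ℝ))
  exact ⟨_, k, 1, one_pos, rfl, hk⟩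

lemma bddAbove_lowerRatios (g : G) : BddAbove (lowerRatios g₀ g) := by
  obtain ⟨k, -, hk⟩ := exists_zpow_smul_le_lt hg₀ 0 (g ^ 1 • (0 : ℝ))
  refine ⟨(k + 1 : ℤ) / (1 : ℕ), ?_⟩
  rintro _ ⟨p, q, hq, rfl, hpq⟩
  exact div_le_div_of_zpow_smul_le hg₀ hq one_pos hpq hk.le

lemma le_translationNumber {g : G} {p : ℤ} {q : ℕ} (hq : 0 < q)
    (h : g₀ ^ p • (0 : ℝ) ≤ g ^ q • 0) : (p : ℝ) / q ≤ translationNumber g₀ g :=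
  le_csSup (bddAbove_lowerRatios hg₀ g) ⟨p, q, hq, rfl, h⟩

lemma translationNumber_le {g : G} {r : ℤ} {s : ℕ} (hs : 0 < s)
    (h : g ^ s • (0 : ℝ) ≤ g₀ ^ r • 0) : translationNumber g₀ g ≤ r / s := by
  refine csSup_le (lowerRatios_nonempty hg₀ g) ?_
  rintro _ ⟨p, q, hq, rfl, hpq⟩
  exact div_le_div_of_zpow_smul_le hg₀ hq hs hpq h

lemma translationNumber_zpow_self (m : ℤ) : translationNumber g₀ (g₀ ^ m) = m := by
  have hm : (g₀ ^ m) ^ 1 • (0 : ℝ) = g₀ ^ m • 0 := by rw [pow_one]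
  refine le_antisymm ?_ ?_
  · simpa using translationNumber_le hg₀ one_pos hm.le
  · simpa using le_translationNumber hg₀ one_pos hm.ge

lemma translationNumber_self : translationNumber g₀ g₀ = 1 := by
  simpa using translationNumber_zpow_self hg₀ 1

lemma translationNumber_mono {g h : G} (hgh : g • (0 : ℝ) ≤ h • 0) :
    translationNumber g₀ g ≤ translationNumber g₀ h := by
  refine csSup_le_csSup (bddAbove_lowerRatios hg₀ h) (lowerRatios_nonempty hg₀ g) ?_
  rintro _ ⟨p, q, hq, rfl, hpq⟩
  exact ⟨p, q, hq, rfl, hpq.trans (pow_smul_le_pow_smul hgh q)⟩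

lemma add_le_translationNumber_mul (g h : G) :
    translationNumber g₀ g + translationNumber g₀ h ≤ translationNumber g₀ (g * h) := by
  rw [translationNumber, translationNumber, ← csSup_add (lowerRatios_nonempty hg₀ g)
    (bddAbove_lowerRatios hg₀ g) (lowerRatios_nonempty hg₀ h) (bddAbove_lowerRatios hg₀ h)]
  refine csSup_le ((lowerRatios_nonempty hg₀ g).add (lowerRatios_nonempty hg₀ h)) ?_
  rintro _ ⟨_, ⟨p, q, hq, rfl, hpq⟩, _, ⟨u, v, hv, rfl, huv⟩, rfl⟩
  have h₁ : g₀ ^ (p * v) • (0 : ℝ) ≤ g ^ (q * v) • 0 := by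
    simpa [zpow_mul, pow_mul] using pow_smul_le_pow_smul hpq v
  have h₂ : g₀ ^ (u * q) • (0 : ℝ) ≤ h ^ (v * q) • 0 := by
    simpa [zpow_mul, pow_mul] using pow_smul_le_pow_smul huv q
  have hsum := mul_smul_le_mul_smul h₁ h₂
  rw [← zpow_add, mul_comm v q, ← mul_pow] at hsum
  have hq' : (q : ℝ) ≠ 0 := by positivity
  have hv' : (v : ℝ) ≠ 0 := by positivity
  have hfrac : (p : ℝ) / q + u / v = ((p * v + u * q : ℤ) : ℝ) / ((q * v : ℕ) : ℝ) := by
    push_cast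
    rw [div_add_div _ _ hq' hv']
    ring
  exact hfrac.trans_le (le_translationNumber hg₀ (Nat.mul_pos hq hv) hsum)

lemma translationNumber_one : translationNumber g₀ (1 : G) = 0 := by
  simpa using translationNumber_zpow_self hg₀ 0

lemma translationNumber_add_inv_nonneg (g : G) :
    0 ≤ translationNumber g₀ g + translationNumber g₀ g⁻¹ := by
  have hq (n : ℕ) : -(1 / ((n : ℝ) + 1)) ≤ translationNumber g₀ g + translationNumber g₀ g⁻¹ := by
    obtain ⟨k, hk, hk'⟩ := exists_zpow_smul_le_lt hg₀ 0 (g ^ (n + 1) • (0 : ℝ))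
    have hinv : g₀ ^ (-(k + 1)) • (0 : ℝ) ≤ g⁻¹ ^ (n + 1) • 0 := by
      rw [zpow_neg, inv_pow]
      exact inv_smul_le_inv_smul_iff.2 hk'.le
    have h₁ := le_translationNumber hg₀ n.succ_pos hk
    have h₂ := le_translationNumber hg₀ n.succ_pos hinv
    push_cast at h₁ h₂
    have : (k : ℝ) / (n + 1) + (-((k : ℝ) + 1)) / (n + 1) = -(1 / ((n : ℝ) + 1)) := by
      field_simp
      ring
    linarith
  simpa using le_of_tendsto' tendsto_one_div_add_atTop_nhds_zero_nat.neg hq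

lemma translationNumber_inv (g : G) : translationNumber g₀ g⁻¹ = -translationNumber g₀ g := by
  have := add_le_translationNumber_mul hg₀ g g⁻¹
  rw [mul_inv_cancel, translationNumber_one hg₀] at this
  linarith [translationNumber_add_inv_nonneg hg₀ g]

lemma translationNumber_mul (g h : G) :
    translationNumber g₀ (g * h) = translationNumber g₀ g + translationNumber g₀ h := by
  have := add_le_translationNumber_mul hg₀ (g * h) h⁻¹
  rw [mul_inv_cancel_right, translationNumber_inv hg₀] at this
  linarith [add_le_translationNumber_mul hg₀ g h]

end TranslationNumber

section StieltjesInvariance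

lemma Monotone.rightLim_orderIso_apply {f : ℝ → ℝ} (hf : Monotone f) (e : ℝ ≃o ℝ) {c : ℝ}
    (h : ∀ x, f (e x) = c + f x) (x : ℝ) :
    Function.rightLim f (e x) = c + Function.rightLim f x := by
  have hbdd : BddBelow (f '' Ioi x) := ⟨f x, forall_mem_image.2 fun y hy => hf (le_of_lt hy)⟩
  rw [hf.rightLim_eq_sInf, hf.rightLim_eq_sInf, ← e.image_Ioi, image_image, funext h,
    ← image_image (c + ·) f]
  exact ((OrderIso.addLeft c).map_csInf' (nonempty_Ioi.image f) hbdd).symm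

lemma StieltjesFunction.measurePreserving_of_apply_orderIso (Φ : StieltjesFunction ℝ)
    (e : ℝ ≃o ℝ) {c : ℝ} (h : ∀ x, Φ (e x) = c + Φ x) :
    MeasurePreserving e Φ.measure Φ.measure := by
  refine ⟨e.continuous.measurable, (Measure.ext_of_Ioc _ _ fun a b _ => ?_).symm⟩
  have ha := h (e.symm a)
  have hb := h (e.symm b)
  rw [e.apply_symm_apply] at ha hb
  rw [Measure.map_apply e.continuous.measurable measurableSet_Ioc, e.preimage_Ioc, Φ.measure_Ioc,
    Φ.measure_Ioc, ha, hb, add_sub_add_left_eq_sub]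

end StieltjesInvariance

section InvariantMeasure

variable {G : Type*} [CommGroup G] [MulAction G ℝ] [CovariantClass G ℝ HSMul.hSMul LE.le]
  {g₀ : G}

noncomputable def translationCoord (g₀ : G) (x : ℝ) : ℝ :=
  sSup (translationNumber g₀ '' {h : G | h • (0 : ℝ) ≤ x})

variable (hg₀ : ∀ x : ℝ, x < g₀ • x)
include hg₀

lemma nonempty_image_translationNumber (x : ℝ) :
    (translationNumber g₀ '' {h : G | h • (0 : ℝ) ≤ x}).Nonempty := by
  obtain ⟨k, hk, -⟩ := exists_zpow_smul_le_lt hg₀ 0 x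
  exact ⟨_, g₀ ^ k, hk, rfl⟩

lemma bddAbove_image_translationNumber (x : ℝ) :
    BddAbove (translationNumber g₀ '' {h : G | h • (0 : ℝ) ≤ x}) := by
  obtain ⟨k, -, hk⟩ := exists_zpow_smul_le_lt hg₀ 0 x
  refine ⟨k + 1, forall_mem_image.2 fun h hh => ?_⟩
  simpa [translationNumber_zpow_self hg₀] using translationNumber_mono hg₀ (hh.trans hk.le)

lemma monotone_translationCoord : Monotone (translationCoord g₀) := fun x y hxy =>
  csSup_le_csSup (bddAbove_image_translationNumber hg₀ y) (nonempty_image_translationNumber hg₀ x)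
    (image_mono fun _ hh => le_trans hh hxy)

lemma translationCoord_smul (g : G) (x : ℝ) :
    translationCoord g₀ (g • x) = translationNumber g₀ g + translationCoord g₀ x := by
  have hset : translationNumber g₀ '' {h : G | h • (0 : ℝ) ≤ g • x} =
      (translationNumber g₀ g + ·) '' (translationNumber g₀ '' {h : G | h • (0 : ℝ) ≤ x}) := by
    ext r
    constructor
    · rintro ⟨h, hh, rfl⟩
      refine ⟨_, ⟨g⁻¹ * h, ?_, rfl⟩, ?_⟩
      · show (g⁻¹ * h) • (0 : ℝ) ≤ x
        rw [mul_smul]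
        exact (smulOrderIso g).symm_apply_le.2 hh
      · show translationNumber g₀ g + _ = _
        rw [← translationNumber_mul hg₀, mul_inv_cancel_left]
    · rintro ⟨_, ⟨h, hh, rfl⟩, rfl⟩
      refine ⟨g * h, ?_, translationNumber_mul hg₀ g h⟩
      show (g * h) • (0 : ℝ) ≤ g • x
      rw [mul_smul]
      exact smul_mono_right g hh
  rw [translationCoord, hset]
  exact ((OrderIso.addLeft _).map_csSup' (nonempty_image_translationNumber hg₀ x)
    (bddAbove_image_translationNumber hg₀ x)).symm

theorem exists_invariant_measure :
    ∃ μ : Measure ℝ, μ ≠ 0 ∧ (∀ x y : ℝ, μ (Ico x y) < ⊤) ∧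
      ∀ g : G, MeasurePreserving (g • ·) μ μ := by
  set Φ := (monotone_translationCoord hg₀).stieltjesFunction
  have hΦ (g : G) (x : ℝ) : Φ (g • x) = translationNumber g₀ g + Φ x :=
    (monotone_translationCoord hg₀).rightLim_orderIso_apply (smulOrderIso g)
      (translationCoord_smul hg₀ g) x
  refine ⟨Φ.measure, fun h0 => ?_, fun x y => measure_Ico_lt_top,
    fun g => Φ.measurePreserving_of_apply_orderIso (smulOrderIso g) (hΦ g)⟩
  have := Φ.measure_Ioc 0 (g₀ • 0)
  rw [h0, hΦ, translationNumber_self hg₀, add_sub_cancel_right] at this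
  simp at this

end InvariantMeasure

lemma map_zpow_of_map_mul {G : Type*} [Group G] {f : G → ℝ}
    (hf : ∀ a b, f (a * b) = f a + f b) (a : G) (n : ℤ) : f (a ^ n) = n * f a := by
  have : Multiplicative.ofAdd (f (a ^ n)) = Multiplicative.ofAdd (f a) ^ n :=
    map_zpow (MonoidHom.mk' (fun g => Multiplicative.ofAdd (f g)) hf) a n
  rwa [← ofAdd_zsmul, Multiplicative.ofAdd.apply_eq_iff_eq, zsmul_eq_mul] at this

section SignedMeasure

noncomputable def signedMeasureIco (μ : Measure ℝ) (a b : ℝ) : ℝ :=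
  if a ≤ b then μ.real (Ico a b) else -μ.real (Ico b a)

variable {μ : Measure ℝ} {a b c : ℝ}

lemma signedMeasureIco_of_le (h : a ≤ b) : signedMeasureIco μ a b = μ.real (Ico a b) := if_pos h

lemma signedMeasureIco_self (a : ℝ) : signedMeasureIco μ a a = 0 := by
  simp [signedMeasureIco_of_le le_rfl]

lemma signedMeasureIco_swap (a b : ℝ) : signedMeasureIco μ b a = -signedMeasureIco μ a b := by
  rcases lt_trichotomy a b with h | rfl | h
  · simp [signedMeasureIco, h.le, h.not_ge]
  · simp [signedMeasureIco_self]
  · simp [signedMeasureIco, h.le, h.not_ge]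

lemma signedMeasureIco_add (hμ : ∀ a b, μ (Ico a b) ≠ ⊤) (a b c : ℝ) :
    signedMeasureIco μ a b + signedMeasureIco μ b c = signedMeasureIco μ a c := by
  have key {a b c : ℝ} (hab : a ≤ b) (hbc : b ≤ c) :
      signedMeasureIco μ a b + signedMeasureIco μ b c = signedMeasureIco μ a c := by
    rw [signedMeasureIco_of_le hab, signedMeasureIco_of_le hbc,
      signedMeasureIco_of_le (hab.trans hbc), ← Ico_union_Ico_eq_Ico hab hbc,
      measureReal_union Ico_disjoint_Ico_same measurableSet_Ico (hμ a b) (hμ b c)]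
  have swap := @signedMeasureIco_swap μ
  rcases le_total a b with hab | hba <;> rcases le_total b c with hbc | hcb
  · exact key hab hbc
  · rcases le_total a c with hac | hca
    · linarith [key hac hcb, swap c b]
    · linarith [key hca hab, swap c a, swap c b]
  · rcases le_total a c with hac | hca
    · linarith [key hba hac, swap b a]
    · linarith [key hbc hca, swap b a, swap c a]
  · linarith [key hcb hba, swap c b, swap b a, swap c a]

lemma signedMeasureIco_mono (hμ : ∀ a b, μ (Ico a b) ≠ ⊤) (hbc : b ≤ c) :
    signedMeasureIco μ a b ≤ signedMeasureIco μ a c := by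
  rw [← signedMeasureIco_add hμ a b c, signedMeasureIco_of_le hbc]
  linarith [measureReal_nonneg (μ := μ) (s := Ico b c)]

lemma signedMeasureIco_orderIso (e : ℝ ≃o ℝ) (he : MeasurePreserving e μ μ) (a b : ℝ) :
    signedMeasureIco μ (e a) (e b) = signedMeasureIco μ a b := by
  have hIco (a b : ℝ) : μ.real (Ico (e a) (e b)) = μ.real (Ico a b) := by
    rw [← he.measureReal_preimage measurableSet_Ico.nullMeasurableSet, e.preimage_Ico,
      e.symm_apply_apply, e.symm_apply_apply]
  simp only [signedMeasureIco, e.le_iff_le, hIco]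

end SignedMeasure

section MeasureTranslation

variable {G : Type*} [Group G] [MulAction G ℝ] [CovariantClass G ℝ HSMul.hSMul LE.le]
  {μ : Measure ℝ} (hμ : ∀ a b, μ (Ico a b) ≠ ⊤) (hinv : ∀ g : G, MeasurePreserving (g • ·) μ μ)
  {g₀ : G} (hg₀ : ∀ x : ℝ, x < g₀ • x)
include hμ hinv

lemma signedMeasureIco_smul_eq (g : G) (x y : ℝ) :
    signedMeasureIco μ x (g • x) = signedMeasureIco μ y (g • y) := by
  have hg := signedMeasureIco_orderIso (smulOrderIso g) (hinv g) y x
  simp only [smulOrderIso_apply] at hg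
  linarith [signedMeasureIco_add hμ x y (g • y), signedMeasureIco_add hμ x (g • y) (g • x),
    signedMeasureIco_swap (μ := μ) x y]

lemma signedMeasureIco_mul_smul (g h : G) :
    signedMeasureIco μ 0 ((g * h) • 0) =
      signedMeasureIco μ 0 (g • 0) + signedMeasureIco μ 0 (h • 0) := by
  rw [← signedMeasureIco_add hμ 0 (h • 0), mul_smul, signedMeasureIco_smul_eq hμ hinv g (h • 0) 0,
    add_comm]

include hg₀ in
lemma signedMeasureIco_smul_pos (hμ₀ : μ ≠ 0) : 0 < signedMeasureIco μ 0 (g₀ • 0) := by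
  rw [signedMeasureIco_of_le (hg₀ 0).le]
  refine measureReal_nonneg.lt_of_ne fun h₀ => hμ₀ ?_
  have hnull (k : ℤ) : μ (Ico (g₀ ^ k • 0) (g₀ ^ (k + 1) • 0)) = 0 := by
    have := signedMeasureIco_smul_eq hμ hinv g₀ (g₀ ^ k • 0) 0
    rw [signedMeasureIco_of_le (hg₀ _).le, signedMeasureIco_of_le (hg₀ _).le, ← h₀, smul_smul,
      ← zpow_one_add, add_comm, measureReal_eq_zero_iff (hμ _ _)] at this
    exact this
  rw [← Measure.measure_univ_eq_zero]
  refine measure_mono_null (fun y _ => ?_) (measure_iUnion_null hnull)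
  exact mem_iUnion.2 (exists_zpow_smul_le_lt hg₀ 0 y)

end MeasureTranslation

section Uniqueness

variable {G : Type*} [CommGroup G] [MulAction G ℝ] [CovariantClass G ℝ HSMul.hSMul LE.le]
  {μ : Measure ℝ} (hμ : ∀ a b, μ (Ico a b) ≠ ⊤) (hinv : ∀ g : G, MeasurePreserving (g • ·) μ μ)
  {g₀ : G} (hg₀ : ∀ x : ℝ, x < g₀ • x)
include hμ hinv hg₀

lemma signedMeasureIco_smul_eq_mul (hμ₀ : μ ≠ 0) (g : G) (x : ℝ) :
    signedMeasureIco μ x (g • x) = translationNumber g₀ g * signedMeasureIco μ 0 (g₀ • 0) := by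
  set T := fun g : G => signedMeasureIco μ 0 (g • 0)
  have hT : ∀ a b, T (a * b) = T a + T b := signedMeasureIco_mul_smul hμ hinv
  have hpos : 0 < T g₀ := signedMeasureIco_smul_pos hμ hinv hg₀ hμ₀
  have hle (g : G) : translationNumber g₀ g * T g₀ ≤ T g := by
    rw [← le_div_iff₀ hpos]
    refine csSup_le (lowerRatios_nonempty hg₀ g) ?_
    rintro _ ⟨p, q, hq, rfl, hpq⟩
    have hTle : T (g₀ ^ p) ≤ T (g ^ q) := signedMeasureIco_mono hμ hpq
    have hTp : T (g₀ ^ p) = p * T g₀ := map_zpow_of_map_mul hT g₀ p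
    have hTq : T (g ^ q) = q * T g := by simpa using map_zpow_of_map_mul hT g q
    rw [div_le_div_iff₀ (by positivity) hpos]
    linarith
  have hinvT : T g⁻¹ = -T g := by
    have := hT g g⁻¹
    rw [mul_inv_cancel] at this
    simp only [T, one_smul, signedMeasureIco_self] at this
    linarith
  rw [signedMeasureIco_smul_eq hμ hinv g x 0]
  refine le_antisymm ?_ (hle g)
  have := hle g⁻¹
  rw [translationNumber_inv hg₀, hinvT] at this
  linarith

end Uniqueness

theorem exists_pos_signedMeasureIco_smul_eq_mul {G : Type*} [CommGroup G] [MulAction G ℝ]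
    [CovariantClass G ℝ HSMul.hSMul LE.le] {g₀ : G} (hg₀ : ∀ x : ℝ, x < g₀ • x)
    {μ₁ μ₂ : Measure ℝ} (hμ₁ : μ₁ ≠ 0) (hfin₁ : ∀ a b, μ₁ (Ico a b) ≠ ⊤)
    (hinv₁ : ∀ g : G, MeasurePreserving (g • ·) μ₁ μ₁) (hμ₂ : μ₂ ≠ 0)
    (hfin₂ : ∀ a b, μ₂ (Ico a b) ≠ ⊤) (hinv₂ : ∀ g : G, MeasurePreserving (g • ·) μ₂ μ₂) :
    ∃ c : ℝ, 0 < c ∧ ∀ (g : G) (x : ℝ),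
      signedMeasureIco μ₁ x (g • x) = c * signedMeasureIco μ₂ x (g • x) := by
  have hpos₁ := signedMeasureIco_smul_pos hfin₁ hinv₁ hg₀ hμ₁
  have hpos₂ := signedMeasureIco_smul_pos hfin₂ hinv₂ hg₀ hμ₂
  refine ⟨signedMeasureIco μ₁ 0 (g₀ • 0) / signedMeasureIco μ₂ 0 (g₀ • 0), div_pos hpos₁ hpos₂,
    fun g x => ?_⟩
  rw [signedMeasureIco_smul_eq_mul hfin₁ hinv₁ hg₀ hμ₁ g x,
    signedMeasureIco_smul_eq_mul hfin₂ hinv₂ hg₀ hμ₂ g x]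
  field_simp

/-- Every finitely generated abelian group of orientation-preserving homeomorphisms of an
open interval (identified with `ℝ`) without global fixed points preserves a (nonzero)
Radon measure, and the translation number homomorphisms of any two invariant Radon
measures agree up to multiplication by a positive real constant. -/
theorem stmt16 (G : Type) [CommGroup G] [Group.FG G] (F : G →* Equiv.Perm ℝ)
    (hmono : ∀ g : G, StrictMono (F g))
    (hnofix : ∀ x : ℝ, ∃ g : G, F g x ≠ x) :
    (∃ μ : Measure ℝ, μ ≠ 0 ∧ (∀ x y : ℝ, μ (Set.Ico x y) < ⊤) ∧
        ∀ g : G, MeasurePreserving (F g) μ μ) ∧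
    (∀ μ₁ μ₂ : Measure ℝ,
      μ₁ ≠ 0 → (∀ x y : ℝ, μ₁ (Set.Ico x y) < ⊤) → (∀ g : G, MeasurePreserving (F g) μ₁ μ₁) →
      μ₂ ≠ 0 → (∀ x y : ℝ, μ₂ (Set.Ico x y) < ⊤) → (∀ g : G, MeasurePreserving (F g) μ₂ μ₂) →
      ∃ c : ℝ, 0 < c ∧ ∀ (g : G) (x : ℝ),
        (if x ≤ F g x then (μ₁ (Set.Ico x (F g x))).toReal
          else -(μ₁ (Set.Ico (F g x) x)).toReal)
        = c * (if x ≤ F g x then (μ₂ (Set.Ico x (F g x))).toReal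
          else -(μ₂ (Set.Ico (F g x) x)).toReal)) := by
  let : MulAction G ℝ := MulAction.compHom ℝ F
  have : CovariantClass G ℝ HSMul.hSMul LE.le := ⟨fun g _ _ h => (hmono g).monotone h⟩
  have hG : fixedPoints G ℝ = ∅ :=
    eq_empty_of_forall_notMem fun x hx => (hnofix x).elim fun g hg => hg (hx g)
  obtain ⟨g₀, hg₀⟩ := exists_forall_lt_smul hG
  exact ⟨exists_invariant_measure hg₀, fun μ₁ μ₂ hμ₁ hfin₁ hinv₁ hμ₂ hfin₂ hinv₂ =>
    exists_pos_signedMeasureIco_smul_eq_mul hg₀ hμ₁ (fun a b => (hfin₁ a b).ne) hinv₁ hμ₂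
      (fun a b => (hfin₂ a b).ne) hinv₂⟩
end

section
/- Let g₁, …, g_k be homeomorphisms of ℝ, each either the identity on an interval J = (u,v) or moving every point weakly to the right, and suppose that for any two distinct words W = g_k^{ε_k} ⋯ g_1^{ε_1} and W' = g_k^{ε'_k} ⋯ g_1^{ε'_1} (ε_i, ε'_i ∈ {0,1}) with largest differing index i (ε_i = 1, ε'_i = 0), one has W(u) ≥ g_i(u) and W'(v) ≤ g_{i-1}^{ε'_{i-1}} ⋯ g_1^{ε'_1}(v), and g_i(u) > g_{i-1} ⋯ g_1(v). Then W(J) ∩ W'(J) = ∅, and hence the 2^k intervals W(J) over all ε ∈ {0,1}^k are pairwise disjoint. -/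
/-- Cantwell–Conlon disjointness lemma. Let `g 1, …, g k` be orientation-preserving
homeomorphisms of `ℝ`, each either the identity on `J = (u,v)` or moving every point
weakly to the right, and for `ε : ℕ → Bool` let
`W ε = (g k)^{ε k} ∘ ⋯ ∘ (g 1)^{ε 1}`. Suppose that whenever two words `W ε`, `W ε'`
differ last at index `i` (with `ε i = true`, `ε' i = false`) one has
`W ε (u) ≥ g i (u)`, `W ε' (v) ≤ (g (i-1))^{ε' (i-1)} ⋯ (g 1)^{ε' 1} (v)`, and
`g i (u) > g (i-1) ⋯ g 1 (v)`. Then any two such words have disjoint images of `J`,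
so the `2^k` intervals `W ε (J)` are pairwise disjoint. -/
theorem stmt18 (k : ℕ) (g : ℕ → ℝ → ℝ)
    (hmono : ∀ i, Monotone (g i))
    (u v : ℝ) (huv : u < v)
    (hright : ∀ i, (Set.EqOn (g i) id (Set.Ioo u v)) ∨ (∀ x : ℝ, x ≤ g i x))
    (P : ℕ → (ℕ → Bool) → ℝ → ℝ)
    (hP : ∀ m ε x, P m ε x
      = (List.range m).foldl (fun y j => if ε (j + 1) then g (j + 1) y else y) x)
    (hkey : ∀ ε ε' : ℕ → Bool, ∀ i, 1 ≤ i → i ≤ k →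
      ε i = true → ε' i = false → (∀ j, i < j → j ≤ k → ε j = ε' j) →
      g i u ≤ P k ε u ∧
      P k ε' v ≤ P (i - 1) ε' v ∧
      P (i - 1) (fun _ => true) v < g i u) :
    ∀ ε ε' : ℕ → Bool, (∃ i, 1 ≤ i ∧ i ≤ k ∧ ε i ≠ ε' i) →
      Disjoint (P k ε '' Set.Ioo u v) (P k ε' '' Set.Ioo u v) := by
  -- basic recursion for P
  have hP0 : ∀ (ε : ℕ → Bool) x, P 0 ε x = x := by
    intro ε x; rw [hP]; simp
  have hPsucc : ∀ m (ε : ℕ → Bool) x,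
      P (m+1) ε x = if ε (m+1) then g (m+1) (P m ε x) else P m ε x := by
    intro m ε x
    rw [hP, hP, List.range_succ, List.foldl_append]
    simp
  -- monotonicity of each word
  have hmonoP : ∀ m (ε : ℕ → Bool), Monotone (P m ε) := by
    intro m ε
    induction m with
    | zero => intro x y h; rw [hP0, hP0]; exact h
    | succ n ih =>
      intro x y h
      rw [hPsucc, hPsucc]
      by_cases hb : ε (n+1)
      · simp only [hb, if_true]; exact hmono _ (ih h)
      · simp only [hb, if_false]; exact ih h
  -- every g i, 1 ≤ i ≤ k, moves points weakly right
  have hR : ∀ i, 1 ≤ i → i ≤ k → ∀ x, x ≤ g i x := by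
    intro i
    induction i using Nat.strong_induction_on with
    | _ i ih =>
      intro h1 h2
      have hle : ∀ m, m ≤ i - 1 → v ≤ P m (fun _ => true) v := by
        intro m
        induction m with
        | zero => intro _; rw [hP0]
        | succ n ihn =>
          intro hm
          rw [hPsucc]
          simp only [if_true]
          calc v ≤ P n (fun _ => true) v := ihn (by omega)
            _ ≤ g (n+1) (P n (fun _ => true) v) :=
              ih (n+1) (by omega) (by omega) (by omega) _
      have key := hkey (fun _ => true) (fun j => decide (j ≠ i)) i h1 h2 rfl
        (by simp) (fun j hj _ => by simp [Nat.ne_of_gt hj])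
      have h3 := key.2.2
      have hv : v ≤ P (i-1) (fun _ => true) v := hle (i-1) le_rfl
      rcases hright i with hid | hr
      · exfalso
        have hz : (u+v)/2 ∈ Set.Ioo u v := by constructor <;> linarith
        have hgz : g i ((u+v)/2) = (u+v)/2 := hid hz
        have hgu : g i u ≤ (u+v)/2 := by
          calc g i u ≤ g i ((u+v)/2) := hmono i (by linarith)
            _ = (u+v)/2 := hgz
        linarith
      · exact hr
  -- comparison against the all-true word
  have hcmp : ∀ m, m ≤ k → ∀ (δ : ℕ → Bool) x, P m δ x ≤ P m (fun _ => true) x := by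
    intro m
    induction m with
    | zero => intro _ δ x; rw [hP0, hP0]
    | succ n ihn =>
      intro hm δ x
      rw [hPsucc, hPsucc]
      simp only [if_true]
      have h1 : P n δ x ≤ P n (fun _ => true) x := ihn (by omega) δ x
      by_cases hb : δ (n+1)
      · simp only [hb, if_true]; exact hmono _ h1
      · simp only [hb, if_false]
        calc P n δ x ≤ P n (fun _ => true) x := h1
          _ ≤ g (n+1) (P n (fun _ => true) x) := hR (n+1) (by omega) (by omega) _
  -- main half: the case ε i = true, ε' i = false at the largest differing index
  have main : ∀ ε ε' : ℕ → Bool, ∀ i, 1 ≤ i → i ≤ k →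
      ε i = true → ε' i = false → (∀ j, i < j → j ≤ k → ε j = ε' j) →
      Disjoint (P k ε '' Set.Ioo u v) (P k ε' '' Set.Ioo u v) := by
    intro ε ε' i h1 h2 ht hf hag
    obtain ⟨k1, k2, k3⟩ := hkey ε ε' i h1 h2 ht hf hag
    rw [Set.disjoint_left]
    rintro z ⟨x, hx, rfl⟩ ⟨y, hy, hzy⟩
    have c1 : P k ε' y ≤ P k ε' v := hmonoP k ε' (le_of_lt hy.2)
    have c2 : P (i-1) ε' v ≤ P (i-1) (fun _ => true) v := hcmp (i-1) (by omega) ε' v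
    have c3 : P k ε u ≤ P k ε x := hmonoP k ε (le_of_lt hx.1)
    have : P k ε' y < P k ε x := by linarith
    rw [hzy] at this
    exact lt_irrefl _ this
  intro ε ε' ⟨i0, hi1, hi2, hne⟩
  -- largest differing index
  set S : Finset ℕ := (Finset.Icc 1 k).filter (fun j => ε j ≠ ε' j) with hS
  have hSne : S.Nonempty := ⟨i0, by simp [hS, hi1, hi2, hne]⟩
  set i := S.max' hSne with hi
  have hiS : i ∈ S := S.max'_mem hSne
  have hi1' : 1 ≤ i := by
    have := Finset.mem_filter.mp hiS
    exact (Finset.mem_Icc.mp this.1).1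
  have hi2' : i ≤ k := by
    have := Finset.mem_filter.mp hiS
    exact (Finset.mem_Icc.mp this.1).2
  have hine : ε i ≠ ε' i := (Finset.mem_filter.mp hiS).2
  have hag : ∀ j, i < j → j ≤ k → ε j = ε' j := by
    intro j hj hjk
    by_contra hne'
    have hjS : j ∈ S := by simp [hS, hne', hjk]; omega
    exact absurd (S.le_max' j hjS) (by omega)
  cases hti : ε i with
  | true =>
    have hfi : ε' i = false := by
      cases h : ε' i
      · rfl
      · exact absurd (hti.trans h.symm) hine
    exact main ε ε' i hi1' hi2' hti hfi hag
  | false =>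
    have hfi : ε' i = true := by
      cases h : ε' i
      · exact absurd (hti.trans h.symm) hine
      · rfl
    exact (main ε' ε i hi1' hi2' hfi hti (fun j h1 h2 => (hag j h1 h2).symm)).symm
end

section
/- For any real λ > 2 and any t with λt > 1 satisfying i ≤ t(λ^i − (λ^i−1)/(λ−1)) for all i ∈ ℕ, and for any μ-values: if μ([u, u_*)) ≥ λ^i t − 1 and μ([u, v)) < t and μ([v, v'_*)) ≤ ((λ^i−1)/(λ−1) − 1)t + (i−1), where u < v and μ is a translation-invariant-positive Borel measure on ℝ giving positive measure to every nonempty open interval of the relevant region, then v'_* < u_*. -/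
open MeasureTheory

/-- If `μ([u,ustar)) ≥ λ^i t − 1`, `μ([u,v)) < t`, and
`μ([v,vstar)) ≤ ((λ^i − 1)/(λ − 1) − 1)t + (i − 1)`, where `λ > 2`, `λt > 1`,
`i ≤ t(λ^i − (λ^i − 1)/(λ − 1))` for all `i`, and `μ` gives positive measure to every
nonempty open interval, then `vstar < ustar`. -/
theorem stmt19 (lam t : ℝ) (hlam : 2 < lam) (hlt : 1 < lam * t)
    (hineq : ∀ i : ℕ, (i : ℝ) ≤ t * (lam ^ i - (lam ^ i - 1) / (lam - 1)))
    (μ : Measure ℝ)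
    (hpos : ∀ x y : ℝ, x < y → 0 < μ (Set.Ioo x y))
    (u v ustar vstar : ℝ) (huv : u < v) (hu : u < ustar) (hv : v < vstar)
    (i : ℕ) (hi : 1 ≤ i)
    (h₁ : ENNReal.ofReal (lam ^ i * t - 1) ≤ μ (Set.Ico u ustar))
    (h₂ : μ (Set.Ico u v) < ENNReal.ofReal t)
    (h₃ : μ (Set.Ico v vstar)
      ≤ ENNReal.ofReal (((lam ^ i - 1) / (lam - 1) - 1) * t + ((i : ℝ) - 1))) :
    vstar < ustar := by
  by_contra hc
  push_neg at hc
  -- ustar ≤ vstar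
  have ht : 0 < t := by nlinarith
  have hlam1 : (1 : ℝ) < lam - 1 := by linarith
  have hpow : lam ≤ lam ^ i := by
    calc lam = lam ^ 1 := (pow_one lam).symm
    _ ≤ lam ^ i := pow_le_pow_right₀ (by linarith) hi
  have hq : (1 : ℝ) ≤ (lam ^ i - 1) / (lam - 1) :=
    (one_le_div (by linarith)).2 (by linarith)
  have hb : 0 ≤ ((lam ^ i - 1) / (lam - 1) - 1) * t + ((i : ℝ) - 1) := by
    have : (1 : ℝ) ≤ (i : ℝ) := by exact_mod_cast hi
    nlinarith
  have hsub : Set.Ico u ustar ⊆ Set.Ico u v ∪ Set.Ico v vstar := by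
    intro x hx
    rcases lt_or_ge x v with h | h
    · exact Or.inl ⟨hx.1, h⟩
    · exact Or.inr ⟨h, lt_of_lt_of_le hx.2 hc⟩
  have key : (i : ℝ) ≤ t * (lam ^ i - (lam ^ i - 1) / (lam - 1)) := hineq i
  have hreal : t + (((lam ^ i - 1) / (lam - 1) - 1) * t + ((i : ℝ) - 1))
      ≤ lam ^ i * t - 1 := by nlinarith
  have chain : ENNReal.ofReal (lam ^ i * t - 1)
      < ENNReal.ofReal (lam ^ i * t - 1) := by
    calc ENNReal.ofReal (lam ^ i * t - 1) ≤ μ (Set.Ico u ustar) := h₁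
    _ ≤ μ (Set.Ico u v ∪ Set.Ico v vstar) := measure_mono hsub
    _ ≤ μ (Set.Ico u v) + μ (Set.Ico v vstar) := measure_union_le _ _
    _ < ENNReal.ofReal t
        + ENNReal.ofReal (((lam ^ i - 1) / (lam - 1) - 1) * t + ((i : ℝ) - 1)) := by
        exact ENNReal.add_lt_add_of_lt_of_le (ne_top_of_le_ne_top ENNReal.ofReal_ne_top h₃) h₂ h₃
    _ = ENNReal.ofReal (t + (((lam ^ i - 1) / (lam - 1) - 1) * t + ((i : ℝ) - 1))) := by
        rw [ENNReal.ofReal_add ht.le hb]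
    _ ≤ ENNReal.ofReal (lam ^ i * t - 1) := ENNReal.ofReal_le_ofReal hreal
  exact absurd chain (lt_irrefl _)
end
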